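/- For every λ > 0, the radial kernel K_λ(A,B) = exp(−λ · d_peak(A,B)) is positive semidefinite on ℝⁿ: for any finite collection A₁,…,A_m ∈ ℝⁿ and any real coefficients c₁,…,c_m, Σᵢ Σⱼ cᵢ cⱼ exp(−λ d_peak(Aᵢ, Aⱼ)) ≥ 0. -/

import Mathlib

open Finset

/-- Sign-aware intersection `N(A,B) = Σ_{i : AᵢBᵢ > 0} min |Aᵢ| |Bᵢ|`. -/
noncomputable def Npeak {n : ℕ} (A B : Fin n → ℝ) : ℝ :=
  ∑ i ∈ Finset.univ.filter (fun i => 0 < A i * B i), min |A i| |B i|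

/-- Peak-to-peak union `U_peak(A,B) = Σᵢ (max Aᵢ⁺ Bᵢ⁺ + max Aᵢ⁻ Bᵢ⁻)`. -/
noncomputable def Upeak {n : ℕ} (A B : Fin n → ℝ) : ℝ :=
  ∑ i, (max (max (A i) 0) (max (B i) 0) + max (max (-(A i)) 0) (max (-(B i)) 0))

/-- Peak-to-peak similarity `J_peak = N/U_peak` (and `1` when `U_peak = 0`). -/
noncomputable def Jpeak {n : ℕ} (A B : Fin n → ℝ) : ℝ :=
  if 0 < Upeak A B then Npeak A B / Upeak A B else 1

/-- Peak-to-peak distance `d_peak = 1 − J_peak`. -/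
noncomputable def dpeak {n : ℕ} (A B : Fin n → ℝ) : ℝ := 1 - Jpeak A B

/-!
Splitting each coordinate into its positive and negative part turns `J_peak` into the weighted
Jaccard similarity `Σ min / Σ max` of nonnegative vectors `xᵢ`. With `Nᵢⱼ = Σₖ min xᵢₖ xⱼₖ` and
masses `sᵢ = Σₖ xᵢₖ` one has `Σ max = sᵢ + sⱼ - Nᵢⱼ`, so the similarity is `r / (1 - r)` for
`rᵢⱼ = Nᵢⱼ / (sᵢ + sⱼ)`. Both `N` (a sum of min-kernels) and the Cauchy matrix `(sᵢ + sⱼ)⁻¹` are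
Gram matrices in `L²`, via `min a b = ⟪1_(0,a], 1_(0,b]⟫` and `(a + b)⁻¹ = ∫₀^∞ e^{-at} e^{-bt} dt`.
Schur's product theorem, together with closedness of positive semidefinite matrices under entrywise
power series with nonnegative coefficients, then makes `r / (1 - r) = Σ_{p ≥ 1} r ^ p` and finally
`exp (-λ d_peak) = e^{-λ} exp (λ J_peak)` positive semidefinite. Zero vectors (zero mass) are
handled by appending a coordinate that flags them, which leaves the similarity unchanged.
-/

open Matrix MeasureTheory

namespace Matrix

variable {ι : Type*} [Fintype ι]

theorem PosSemidef.sum_sum_mul_nonneg {K : Matrix ι ι ℝ} (hK : K.PosSemidef) (c : ι → ℝ) :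
    0 ≤ ∑ i, ∑ j, c i * c j * K i j := by
  simpa [dotProduct, mulVec, Finset.mul_sum, mul_comm, mul_left_comm] using
    hK.dotProduct_mulVec_nonneg c

theorem posSemidef_of_hasSum {K : ℕ → Matrix ι ι ℝ} {L : Matrix ι ι ℝ}
    (hK : ∀ k, (K k).PosSemidef) (hL : ∀ i j, HasSum (fun k => K k i j) (L i j)) :
    L.PosSemidef := by
  refine .of_dotProduct_mulVec_nonneg (IsHermitian.ext fun i j => ?_) fun x => ?_
  · have hsymm (k : ℕ) : K k j i = K k i j := by simpa using (hK k).isHermitian.apply i j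
    rw [star_trivial]
    have hji : HasSum (fun k => K k j i) (L i j) := by simpa only [hsymm] using hL i j
    exact (hL j i).tsum_eq.symm.trans hji.tsum_eq
  · refine HasSum.nonneg (fun k => (hK k).dotProduct_mulVec_nonneg x) (L := .unconditional ℕ) ?_
    exact hasSum_sum fun i _ => (hasSum_sum fun j _ => (hL i j).mul_right (x j)).mul_left _

theorem PosSemidef.map_pow {K : Matrix ι ι ℝ} (hK : K.PosSemidef) (k : ℕ) :
    (K.map (· ^ k)).PosSemidef := by
  induction k with
  | zero =>
    convert posSemidef_vecMulVec_self_star (fun _ : ι => (1 : ℝ)) using 1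
    ext; simp [vecMulVec]
  | succ k ih =>
    have hsucc : K.map (· ^ (k + 1)) = K.map (· ^ k) ⊙ K := by ext; simp [pow_succ]
    exact hsucc ▸ ih.hadamard hK

theorem PosSemidef.map_of_hasSum {K : Matrix ι ι ℝ} (hK : K.PosSemidef) {a : ℕ → ℝ}
    (ha : 0 ≤ a) {f : ℝ → ℝ} (hf : ∀ i j, HasSum (fun k => a k * K i j ^ k) (f (K i j))) :
    (K.map f).PosSemidef :=
  posSemidef_of_hasSum (K := fun k => a k • K.map (· ^ k)) (fun k => (hK.map_pow k).smul (ha k))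
    hf

theorem PosSemidef.map_exp {K : Matrix ι ι ℝ} (hK : K.PosSemidef) :
    (K.map Real.exp).PosSemidef := by
  refine hK.map_of_hasSum (a := fun k => (k.factorial : ℝ)⁻¹) (fun k => by positivity) fun i j => ?_
  simpa [Real.exp_eq_exp_ℝ, div_eq_inv_mul] using NormedSpace.expSeries_div_hasSum_exp (K i j)

theorem PosSemidef.map_inv_one_sub {K : Matrix ι ι ℝ} (hK : K.PosSemidef)
    (h : ∀ i j, |K i j| < 1) : (K.map fun r => (1 - r)⁻¹).PosSemidef :=
  hK.map_of_hasSum (a := 1) (fun _ => zero_le_one) fun i j => by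
    simpa using hasSum_geometric_of_abs_lt_one (h i j)

theorem posSemidef_integral_mul {α : Type*} [MeasurableSpace α] (μ : Measure α)
    (f : ι → α → ℝ) (hf : ∀ i, MemLp (f i) 2 μ) :
    (of fun i j => ∫ x, f i x * f j x ∂μ).PosSemidef := by
  have hgram : gram ℝ (fun i => (hf i).toLp (f i)) = of fun i j => ∫ x, f i x * f j x ∂μ := by
    refine Matrix.ext fun i j => ?_
    rw [of_apply, gram_apply, L2.inner_def]
    refine integral_congr_ae ?_
    filter_upwards [(hf i).coeFn_toLp, (hf j).coeFn_toLp] with x hi hj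
    rw [hi, hj, Real.inner_apply]
  exact hgram ▸ posSemidef_gram ℝ _

theorem posSemidef_min {a : ι → ℝ} (ha : ∀ i, 0 ≤ a i) :
    (of fun i j => min (a i) (a j)).PosSemidef := by
  convert posSemidef_integral_mul volume (fun i => (Set.Ioc 0 (a i)).indicator 1)
    fun i => memLp_indicator_const 2 measurableSet_Ioc 1 (by simp) using 1
  refine Matrix.ext fun i j => ?_
  rw [of_apply, of_apply, ← Pi.mul_def, ← Set.inter_indicator_one, Set.Ioc_inter_Ioc, max_self,
    integral_indicator_one measurableSet_Ioc, Real.volume_real_Ioc_of_le (le_min (ha i) (ha j)),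
    sub_zero]

theorem posSemidef_inv_add {a : ι → ℝ} (ha : ∀ i, 0 < a i) :
    (of fun i j => (a i + a j)⁻¹).PosSemidef := by
  convert posSemidef_integral_mul (volume.restrict (Set.Ioi 0))
    (fun i t => Real.exp (-a i * t)) fun i => ?_ using 1
  · refine Matrix.ext fun i j => ?_
    rw [of_apply, of_apply]
    simp_rw [← Real.exp_add, ← add_mul, ← neg_add]
    rw [integral_exp_mul_Ioi (by linarith [ha i, ha j]), mul_zero, Real.exp_zero, neg_div,
      div_neg, neg_neg, one_div]
  · rw [memLp_two_iff_integrable_sq (by fun_prop)]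
    have hsq (t : ℝ) : Real.exp (-a i * t) ^ 2 = Real.exp (-(2 * a i) * t) := by
      rw [sq, ← Real.exp_add]; ring_nf
    simp_rw [hsq]
    exact exp_neg_integrableOn_Ioi 0 (by linarith [ha i])

end Matrix

section WeightedJaccard

variable {κ : Type*} [Fintype κ]

noncomputable def weightedJaccard (x y : κ → ℝ) : ℝ :=
  if 0 < ∑ k, max (x k) (y k) then (∑ k, min (x k) (y k)) / ∑ k, max (x k) (y k) else 1

theorem weightedJaccard_comm (x y : κ → ℝ) : weightedJaccard x y = weightedJaccard y x := by
  simp only [weightedJaccard, min_comm, max_comm]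

theorem sum_max_eq_sum_add_sum_sub_sum_min (x y : κ → ℝ) :
    ∑ k, max (x k) (y k) = ∑ k, x k + ∑ k, y k - ∑ k, min (x k) (y k) := by
  rw [eq_sub_iff_add_eq, ← sum_add_distrib, ← sum_add_distrib]
  exact sum_congr rfl fun k _ => max_add_min _ _

theorem weightedJaccard_eq_of_sum_pos {x y : κ → ℝ} (hx : 0 ≤ x)
    (hy_pos : 0 < ∑ k, y k) :
    weightedJaccard x y = (∑ k, min (x k) (y k)) / (∑ k, x k + ∑ k, y k) *
      (1 - (∑ k, min (x k) (y k)) / (∑ k, x k + ∑ k, y k))⁻¹ := by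
  have hmin_le : ∑ k, min (x k) (y k) ≤ ∑ k, x k := sum_le_sum fun k _ => min_le_left _ _
  have hmax_pos : 0 < ∑ k, max (x k) (y k) := by
    rw [sum_max_eq_sum_add_sum_sub_sum_min]; linarith
  have hsum_pos : 0 < ∑ k, x k + ∑ k, y k := by
    linarith [sum_nonneg fun k (_ : k ∈ univ) => hx k]
  rw [weightedJaccard, if_pos hmax_pos, sum_max_eq_sum_add_sum_sub_sum_min]
  field_simp

theorem posSemidef_weightedJaccard_of_sum_pos {ι : Type*} [Fintype ι] (x : ι → κ → ℝ)
    (hx : ∀ i, 0 ≤ x i) (hpos : ∀ i, 0 < ∑ k, x i k) :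
    (of fun i j => weightedJaccard (x i) (x j)).PosSemidef := by
  have hN : (of fun i j => ∑ k, min (x i k) (x j k)).PosSemidef := by
    convert posSemidef_sum univ fun k _ => posSemidef_min fun i => hx i k using 1
    ext i j; simp [Matrix.sum_apply]
  set R := (of fun i j => ∑ k, min (x i k) (x j k)) ⊙ of fun i j => (∑ k, x i k + ∑ k, x j k)⁻¹
  have hR : R.PosSemidef := hN.hadamard (posSemidef_inv_add hpos)
  have hR_lt (i j : ι) : |R i j| < 1 := by
    have hmin_nonneg : 0 ≤ ∑ k, min (x i k) (x j k) :=
      sum_nonneg fun k _ => le_min (hx i k) (hx j k)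
    have hmin_le : ∑ k, min (x i k) (x j k) ≤ ∑ k, x i k := sum_le_sum fun k _ => min_le_left _ _
    have hsum_pos : 0 < ∑ k, x i k + ∑ k, x j k := add_pos (hpos i) (hpos j)
    simp only [R, hadamard_apply, of_apply]
    rw [abs_of_nonneg (by positivity), ← div_eq_mul_inv, div_lt_one hsum_pos]
    linarith [hpos j]
  have hJ : of (fun i j => weightedJaccard (x i) (x j)) = R ⊙ R.map fun r => (1 - r)⁻¹ := by
    ext i j
    simp [R, weightedJaccard_eq_of_sum_pos (hx i) (hpos j), div_eq_mul_inv]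
  exact hJ ▸ hR.hadamard (hR.map_inv_one_sub hR_lt)

noncomputable def flagZero (x : κ → ℝ) : Option κ → ℝ :=
  fun o => o.elim (if x = 0 then 1 else 0) x

theorem flagZero_nonneg {x : κ → ℝ} (hx : 0 ≤ x) : 0 ≤ flagZero x := by
  rintro (_ | k)
  · by_cases h : x = 0 <;> simp [flagZero, h]
  · exact hx k

theorem sum_flagZero_pos {x : κ → ℝ} (hx : 0 ≤ x) : 0 < ∑ o, flagZero x o := by
  rw [Fintype.sum_option]
  by_cases h : x = 0
  · simp [flagZero, h]
  · simpa [flagZero, h] using Fintype.sum_pos (hx.lt_of_ne (Ne.symm h))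

theorem weightedJaccard_flagZero {x y : κ → ℝ} (hx : 0 ≤ x) (hy : 0 ≤ y) :
    weightedJaccard (flagZero x) (flagZero y) = weightedJaccard x y := by
  have zero_left {y : κ → ℝ} (hy : 0 ≤ y) (hy0 : y ≠ 0) :
      weightedJaccard (flagZero 0) (flagZero y) = weightedJaccard 0 y := by
    have hpos := Fintype.sum_pos (hy.lt_of_ne (Ne.symm hy0))
    have hmin (k : κ) : min 0 (y k) = 0 := min_eq_left (hy k)
    have hmax (k : κ) : max 0 (y k) = y k := max_eq_right (hy k)
    simp [weightedJaccard, flagZero, Fintype.sum_option, hy0, hmin, hmax, hpos,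
      add_pos_of_pos_of_nonneg one_pos hpos.le]
  by_cases hx0 : x = 0 <;> by_cases hy0 : y = 0
  · simp [weightedJaccard, flagZero, Fintype.sum_option, hx0, hy0]
  · rw [hx0, zero_left hy hy0]
  · rw [hy0, weightedJaccard_comm, zero_left hx hx0, weightedJaccard_comm]
  · simp [weightedJaccard, flagZero, Fintype.sum_option, hx0, hy0]

theorem posSemidef_weightedJaccard {ι : Type*} [Fintype ι] (x : ι → κ → ℝ) (hx : ∀ i, 0 ≤ x i) :
    (of fun i j => weightedJaccard (x i) (x j)).PosSemidef := by
  simpa only [weightedJaccard_flagZero (hx _) (hx _)] using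
    posSemidef_weightedJaccard_of_sum_pos (fun i => flagZero (x i))
      (fun i => flagZero_nonneg (hx i)) fun i => sum_flagZero_pos (hx i)

end WeightedJaccard

theorem min_posPart_add_min_negPart (a b : ℝ) :
    min (max a 0) (max b 0) + min (max (-a) 0) (max (-b) 0) =
      if 0 < a * b then min |a| |b| else 0 := by
  split_ifs with h
  · rcases mul_pos_iff.1 h with ⟨ha, hb⟩ | ⟨ha, hb⟩
    · simp [ha.le, hb.le, abs_of_pos, ha, hb]
    · simp [ha.le, hb.le, abs_of_neg, ha, hb]
  · rcases mul_nonpos_iff.1 (not_lt.1 h) with ⟨ha, hb⟩ | ⟨ha, hb⟩ <;> simp [ha, hb]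

/-- The sign-split embedding `φ`, with the parts `xₖ⁺` and `xₖ⁻` indexed by `Sum.inl k` and
`Sum.inr k` rather than interleaved. -/
def signSplit {n : ℕ} (A : Fin n → ℝ) : Fin n ⊕ Fin n → ℝ :=
  Sum.elim (fun k => max (A k) 0) fun k => max (-A k) 0

theorem signSplit_nonneg {n : ℕ} (A : Fin n → ℝ) : 0 ≤ signSplit A := by
  rintro (k | k) <;> simp [signSplit]

theorem Jpeak_eq_weightedJaccard {n : ℕ} (A B : Fin n → ℝ) :
    Jpeak A B = weightedJaccard (signSplit A) (signSplit B) := by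
  have hN : Npeak A B = ∑ k, min (signSplit A k) (signSplit B k) := by
    rw [Npeak, sum_filter, Fintype.sum_sum_type, ← sum_add_distrib]
    exact sum_congr rfl fun k _ => (min_posPart_add_min_negPart (A k) (B k)).symm
  have hU : Upeak A B = ∑ k, max (signSplit A k) (signSplit B k) := by
    rw [Upeak, Fintype.sum_sum_type, ← sum_add_distrib]
    rfl
  rw [Jpeak, weightedJaccard, hN, hU]

/-- For every `λ > 0`, the radial kernel `K_λ(A,B) = exp(−λ·d_peak(A,B))` is positive
semidefinite on `ℝⁿ`: for any `A₁,…,A_m ∈ ℝⁿ` and real coefficients `c₁,…,c_m`,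
`Σᵢ Σⱼ cᵢ cⱼ exp(−λ d_peak(Aᵢ,Aⱼ)) ≥ 0`. -/
theorem exp_dpeak_kernel_psd {n m : ℕ} (lam : ℝ) (hlam : 0 < lam)
    (A : Fin m → Fin n → ℝ) (c : Fin m → ℝ) :
    0 ≤ ∑ i : Fin m, ∑ j : Fin m,
        c i * c j * Real.exp (-lam * dpeak (A i) (A j)) := by
  have hJ : (of fun i j => Jpeak (A i) (A j)).PosSemidef := by
    simpa only [Jpeak_eq_weightedJaccard] using
      posSemidef_weightedJaccard (fun i => signSplit (A i)) fun i => signSplit_nonneg (A i)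
  have hK := ((hJ.smul hlam.le).map_exp).smul (Real.exp_pos (-lam)).le
  convert hK.sum_sum_mul_nonneg c using 4 with i _ j _
  simp only [Matrix.smul_apply, map_apply, of_apply, smul_eq_mul, dpeak, ← Real.exp_add]
  ring_nf
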